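/- arXiv:2408.07013 — 3 statements merged into one kernel-verified Lean document; each statement's English description precedes it below -/
import Mathlib

section
/- The fixed lattice of the explicit integral involution of Λ_N = U(2)³⊕E8⊕⟨-2⟩² given in Proposition 2.8 of the paper (induced by (ℤ/2ℤ)²) is isometric to U⊕U⊕U(2)⊕D₄(2)⊕⟨-2⟩², and its orthogonal complement in Λ_N is isometric to D₄(2). -/
open Matrix
set_option maxHeartbeats 4000000

def GN : Matrix (Fin 16) (Fin 16) ℤ :=
  !![-2, 0, 0, 0, 0, 0, 0, 0, 0, 0, 0, 0, 0, 0, 0, 0;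
    0, -2, 0, 0, 0, 0, 0, 0, 0, 0, 0, 0, 0, 0, 0, 0;
    0, 0, 0, 2, 0, 0, 0, 0, 0, 0, 0, 0, 0, 0, 0, 0;
    0, 0, 2, 0, 0, 0, 0, 0, 0, 0, 0, 0, 0, 0, 0, 0;
    0, 0, 0, 0, 0, 2, 0, 0, 0, 0, 0, 0, 0, 0, 0, 0;
    0, 0, 0, 0, 2, 0, 0, 0, 0, 0, 0, 0, 0, 0, 0, 0;
    0, 0, 0, 0, 0, 0, 0, 2, 0, 0, 0, 0, 0, 0, 0, 0;
    0, 0, 0, 0, 0, 0, 2, 0, 0, 0, 0, 0, 0, 0, 0, 0;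
    0, 0, 0, 0, 0, 0, 0, 0, -2, 0, 0, 1, 0, 0, 0, 0;
    0, 0, 0, 0, 0, 0, 0, 0, 0, -2, 1, 0, 0, 0, 0, 0;
    0, 0, 0, 0, 0, 0, 0, 0, 0, 1, -2, 1, 0, 0, 0, 0;
    0, 0, 0, 0, 0, 0, 0, 0, 1, 0, 1, -2, 1, 0, 0, 0;
    0, 0, 0, 0, 0, 0, 0, 0, 0, 0, 0, 1, -2, 1, 0, 0;
    0, 0, 0, 0, 0, 0, 0, 0, 0, 0, 0, 0, 1, -2, 1, 0;
    0, 0, 0, 0, 0, 0, 0, 0, 0, 0, 0, 0, 0, 1, -2, 1;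
    0, 0, 0, 0, 0, 0, 0, 0, 0, 0, 0, 0, 0, 0, 1, -2]

def MinvK : Matrix (Fin 16) (Fin 16) ℤ :=
  !![1, 0, 0, 0, 0, 0, 0, 0, 0, 0, 0, 0, 0, 0, 0, 0;
    0, 1, 0, 0, 0, 0, 0, 0, 0, 0, 0, 0, 0, 0, 0, 0;
    0, 0, 1, 0, 0, 0, 0, 0, 0, 0, 0, 0, 0, 0, 0, 0;
    0, 0, 0, 1, 0, 0, 0, 0, 0, 0, 0, 0, 0, 0, 0, 0;
    0, 0, 0, 0, 1, 0, 0, 0, 0, 0, 0, 0, 0, 0, 0, 0;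
    0, 0, 0, 0, 2, 1, 3, 0, -2, 0, 0, 1, 0, 0, 0, 0;
    0, 0, 0, 0, 0, 0, 7, 4, -6, -1, 0, 3, 1, 1, -1, -3;
    0, 0, 0, 0, 3, 0, 14, 7, -12, -2, 0, 6, 2, 1, -1, -5;
    0, 0, 0, 0, 2, 0, 8, 4, -7, 2, 0, 2, 2, 0, 0, -4;
    0, 0, 0, 0, 0, 0, 0, 0, 0, 2, 0, -1, 1, -1, 1, -1;
    0, 0, 0, 0, 0, 0, -4, -2, 3, 4, 1, -4, 1, -2, 2, 0;
    0, 0, 0, 0, 0, 0, -8, -4, 6, 7, 0, -6, 1, -3, 3, 1;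
    0, 0, 0, 0, 0, 0, -8, -4, 6, 6, 0, -6, 1, -2, 2, 2;
    0, 0, 0, 0, 0, 0, -4, -2, 3, 4, 0, -4, 1, -1, 2, 0;
    0, 0, 0, 0, 0, 0, 2, 2, -3, 2, 0, 0, 1, 0, 1, -2;
    0, 0, 0, 0, 0, 0, 6, 4, -6, 0, 0, 2, 2, 0, 0, -3]

def Fix12 : Matrix (Fin 12) (Fin 12) ℤ :=
  !![0, 1, 0, 0, 0, 0, 0, 0, 0, 0, 0, 0;
    1, 0, 0, 0, 0, 0, 0, 0, 0, 0, 0, 0;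
    0, 0, 0, 1, 0, 0, 0, 0, 0, 0, 0, 0;
    0, 0, 1, 0, 0, 0, 0, 0, 0, 0, 0, 0;
    0, 0, 0, 0, 0, 2, 0, 0, 0, 0, 0, 0;
    0, 0, 0, 0, 2, 0, 0, 0, 0, 0, 0, 0;
    0, 0, 0, 0, 0, 0, -4, 0, 2, 0, 0, 0;
    0, 0, 0, 0, 0, 0, 0, -4, 2, 0, 0, 0;
    0, 0, 0, 0, 0, 0, 2, 2, -4, 2, 0, 0;
    0, 0, 0, 0, 0, 0, 0, 0, 2, -4, 0, 0;
    0, 0, 0, 0, 0, 0, 0, 0, 0, 0, -2, 0;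
    0, 0, 0, 0, 0, 0, 0, 0, 0, 0, 0, -2]

def D4two : Matrix (Fin 4) (Fin 4) ℤ :=
  !![-4, 0, 2, 0;
    0, -4, 2, 0;
    2, 2, -4, 2;
    0, 0, 2, -4]

def Vt : Matrix (Fin 12) (Fin 16) ℤ :=
  !![0, 0, 0, 0, -2, -2, 0, -2, -1, 1, 0, 2, 1, 0, 1, 1;
    0, 0, 0, 0, -2, -2, 0, -2, -1, 1, 0, 2, 1, 1, 2, 1;
    0, 0, 0, 0, 1, -1, -3, -4, -1, 1, 2, 5, 5, 3, 0, -2;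
    0, 0, 0, 0, -1, -2, -2, -5, -1, 2, 2, 6, 5, 3, 1, -1;
    0, 0, 1, 0, 0, 0, 0, 0, 0, 0, 0, 0, 0, 0, 0, 0;
    0, 0, 0, 1, 0, 0, 0, 0, 0, 0, 0, 0, 0, 0, 0, 0;
    0, 0, 0, 0, -4, -2, 3, 2, -2, -1, -4, -5, -6, -4, 2, 4;
    0, 0, 0, 0, -2, -4, -3, -7, 0, 5, 6, 13, 10, 6, 4, 0;
    0, 0, 0, 0, 4, 6, 3, 9, 4, -3, -1, -9, -6, -3, -3, 0;
    0, 0, 0, 0, -2, -5, -5, -11, -4, 3, 2, 11, 10, 6, 2, -2;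
    1, 0, 0, 0, 0, 0, 0, 0, 0, 0, 0, 0, 0, 0, 0, 0;
    0, 1, 0, 0, 0, 0, 0, 0, 0, 0, 0, 0, 0, 0, 0, 0]

def Wt : Matrix (Fin 4) (Fin 16) ℤ :=
  !![0, 0, 0, 0, 0, 1, -1, 0, -2, -1, -2, -3, -2, -2, -2, -2;
    0, 0, 0, 0, 0, 0, -1, -1, 0, 1, 2, 3, 2, 2, 0, 0;
    0, 0, 0, 0, 0, 0, 1, 1, 4, 1, 3, 5, 4, 3, 3, 2;
    0, 0, 0, 0, 0, -1, -1, -3, -4, -1, -2, -3, -2, -2, -2, -2]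

def Lmat : Matrix (Fin 12) (Fin 16) ℤ :=
  !![0, 0, 0, 0, 0, -4, 0, -6, 9, -14, 3, 0, 0, -1, 0, 4;
    0, 0, 0, 0, 0, -4, 0, -8, 12, -18, 3, 0, 0, -2, 3, 3;
    0, 0, 0, 0, 0, -2, 0, -6, 7, -14, 4, 0, 0, -2, 2, 3;
    0, 0, 0, 0, 0, 2, 0, -6, 5, -8, 2, 0, 0, -3, 3, 2;
    0, 0, 1, 0, 0, 0, 0, 0, 0, 0, 0, 0, 0, 0, 0, 0;
    0, 0, 0, 1, 0, 0, 0, 0, 0, 0, 0, 0, 0, 0, 0, 0;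
    0, 0, 0, 0, 0, 2, 0, 1, -3, 3, 0, 0, 0, 0, 0, 0;
    0, 0, 0, 0, 0, 1, 0, 3, -4, 6, -1, 0, 0, 1, -1, -1;
    0, 0, 0, 0, 0, 0, 0, -2, 2, -4, 1, 0, 0, 0, 0, 2;
    0, 0, 0, 0, 0, 1, 0, 4, -5, 8, -2, 0, 0, 2, -2, -1;
    1, 0, 0, 0, 0, 0, 0, 0, 0, 0, 0, 0, 0, 0, 0, 0;
    0, 1, 0, 0, 0, 0, 0, 0, 0, 0, 0, 0, 0, 0, 0, 0]

def Cmat : Matrix (Fin 16) (Fin 16) ℤ :=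
  !![0, 0, 0, 0, 0, 0, 0, 0, 0, 0, 0, 0, 0, 0, 0, 0;
    0, 0, 0, 0, 0, 0, 0, 0, 0, 0, 0, 0, 0, 0, 0, 0;
    0, 0, 0, 0, 0, 0, 0, 0, 0, 0, 0, 0, 0, 0, 0, 0;
    0, 0, 0, 0, 0, 0, 0, 0, 0, 0, 0, 0, 0, 0, 0, 0;
    0, 0, 0, 0, 0, 34, 40, -23, 0, 16, 0, 0, 0, 0, -10, 0;
    0, 0, 0, 0, 0, 0, 0, 0, 0, 0, 0, 0, 0, 0, 0, 0;
    0, 0, 0, 0, 0, -3, -3, 2, 0, 0, 0, 0, 0, 0, -1, 0;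
    0, 0, 0, 0, 0, 0, 0, 0, 0, 0, 0, 0, 0, 0, 0, 0;
    0, 0, 0, 0, 0, 0, 0, 0, 0, 0, 0, 0, 0, 0, 0, 0;
    0, 0, 0, 0, 0, 0, 0, 0, 0, 0, 0, 0, 0, 0, 0, 0;
    0, 0, 0, 0, 0, 0, 0, 0, 0, 0, 0, 0, 0, 0, 0, 0;
    0, 0, 0, 0, 0, 0, -1, 0, 0, -2, 0, 0, 0, 0, 3, 0;
    0, 0, 0, 0, 0, 0, -1, 0, 0, -3, 0, 0, 0, 0, 3, 0;
    0, 0, 0, 0, 0, 0, 0, 0, 0, 0, 0, 0, 0, 0, 0, 0;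
    0, 0, 0, 0, 0, 0, 0, 0, 0, 0, 0, 0, 0, 0, 0, 0;
    0, 0, 0, 0, 0, 0, 0, 0, 0, 0, 0, 0, 0, 0, 0, 0]

def Dmat : Matrix (Fin 4) (Fin 16) ℤ :=
  !![0, 0, 0, 0, 0, -68, -81, 46, 0, -35, 0, 0, 0, 0, 23, 0;
    0, 0, 0, 0, 0, -6, -7, 4, 0, -1, 0, 0, 0, 0, 1, 0;
    0, 0, 0, 0, 0, 6, 7, -4, 0, 2, 0, 0, 0, 0, -1, 0;
    0, 0, 0, 0, 0, 50, 59, -34, 0, 25, 0, 0, 0, 0, -17, 0]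

def LpM : Matrix (Fin 4) (Fin 16) ℤ :=
  !![0, 0, 0, 0, 0, 2, 1, -1, 0, 0, 0, 0, 0, 0, 0, 0;
    0, 0, 0, 0, 0, -3, -3, 2, 0, -2, 1, 0, 0, 0, 0, 0;
    0, 0, 0, 0, 0, 0, 0, 0, 0, -2, 1, 0, 0, 0, 0, 0;
    0, 0, 0, 0, 0, 1, 1, -1, 0, 0, 0, 0, 0, 0, 0, 0]

def CpM : Matrix (Fin 16) (Fin 12) ℤ :=
  !![0, -1, 0, 0, 0, 0, 0, 0, 0, 0, 0, 0;
    0, 0, -1, 0, 0, 0, 0, 0, 0, 0, 0, 0;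
    0, 0, 0, 0, 0, -1, 0, 0, 0, 0, 0, 0;
    0, 0, 0, -1, 0, 0, 0, 0, 0, 0, 0, 0;
    -1, 0, 0, 0, 0, 0, 0, 0, 0, 0, 0, 0;
    0, 0, 0, 0, 0, 0, 0, 0, 0, 0, 0, 0;
    0, 0, 0, 0, 0, 0, 0, 0, 0, 0, 0, 0;
    0, 0, 0, 0, 0, 0, 0, 0, 0, 0, 0, 0;
    0, 0, 0, 0, -1, 0, -2, 0, 0, 0, 0, 0;
    0, 0, 0, 0, 0, 0, -1, 0, 0, 0, 0, 0;
    0, 0, 0, 0, 0, 0, -2, 0, 0, 0, 0, 0;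
    0, 0, 0, 0, 0, 0, -4, -1, 0, 0, 0, 0;
    0, 0, 0, 0, 0, 0, -3, 0, -1, 0, 0, 0;
    0, 0, 0, 0, 0, 0, -2, 0, 0, -1, 0, 0;
    0, 0, 0, 0, 0, 0, -1, 0, 0, 0, -1, 0;
    0, 0, 0, 0, 0, 0, -1, 0, 0, 0, 0, -1]

def Rmat : Matrix (Fin 12) (Fin 16) ℤ :=
  !![0, 0, 0, 0, 1, 0, 0, 0, 0, 0, 0, 0, 0, 0, 0, 0;
    1, 0, 0, 0, 0, 0, 0, 0, 0, 0, 0, 0, 0, 0, 0, 0;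
    0, 1, 0, 0, 0, 0, 0, 0, 0, 0, 0, 0, 0, 0, 0, 0;
    0, 0, 0, 1, 0, 0, 0, 0, 0, 0, 0, 0, 0, 0, 0, 0;
    0, 0, 0, 0, 0, -4, -4, 2, 1, -2, 0, 0, 0, 0, 0, 0;
    0, 0, 1, 0, 0, 0, 0, 0, 0, 0, 0, 0, 0, 0, 0, 0;
    0, 0, 0, 0, 0, 6, 5, -4, 0, 5, -2, 0, 0, 0, 0, 0;
    0, 0, 0, 0, 0, -6, -5, 4, 0, -4, 0, 1, 0, 0, 0, 0;
    0, 0, 0, 0, 0, -6, -5, 4, 0, -3, 0, 0, 1, 0, 0, 0;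
    0, 0, 0, 0, 0, 0, 0, 0, 0, 0, -1, 0, 0, 1, 0, 0;
    0, 0, 0, 0, 0, 0, -1, 0, 0, 1, -1, 0, 0, 0, 1, 0;
    0, 0, 0, 0, 0, 0, -1, 0, 0, -1, 0, 0, 0, 0, 0, 1]

def Fmat : Matrix (Fin 12) (Fin 12) ℤ :=
  !![-4, -4, -2, 2, 0, 0, 2, 1, 0, 1, 0, 0;
    0, 0, 0, 0, 0, 0, 0, 0, 0, 0, -1, 0;
    0, 0, 0, 0, 0, 0, 0, 0, 0, 0, 0, -1;
    0, 0, 0, 0, 1, 0, 0, 0, 0, 0, 0, 0;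
    2, 2, 2, 10, 0, 0, 2, 0, 4, -2, 0, 0;
    0, 0, 0, 0, 0, 1, 0, 0, 0, 0, 0, 0;
    2, 2, 8, -8, 0, 0, -1, -3, -4, -2, 0, 0;
    4, 4, 0, 12, 0, 0, 1, 1, 6, -2, 0, 0;
    4, 4, 2, 14, 0, 0, 1, -1, 4, -4, 0, 0;
    2, 0, 2, 2, 0, 0, 0, 0, 0, -2, 0, 0;
    6, 4, 6, 4, 0, 0, -1, -3, 0, -4, 0, 0;
    0, 0, -2, 0, 0, 0, -1, 1, 0, 0, 0, 0]


lemma sum_smul_rows {k : ℕ} (A : Matrix (Fin k) (Fin 16) ℤ) (c : Fin k → ℤ) :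
    ∑ i, c i • A i = Aᵀ *ᵥ c := by
  funext j
  simp [Matrix.mulVec, dotProduct, Matrix.transpose_apply, Finset.sum_apply,
    mul_comm]

lemma hMG : MinvK.transpose * GN * MinvK = GN := by decide
lemma hM2 : MinvK * MinvK = 1 := by decide
lemma hVfix : Vt * MinvKᵀ = Vt := by decide
lemma hVgram : Vt * GN * Vtᵀ = Fix12 := by decide
lemma hVL : Vtᵀ * Lmat = 1 + Cmat * (MinvK - 1) := by decide
lemma hWG : Wt * GN = Dmat * (MinvK - 1) := by decide
lemma hWgram : Wt * GN * Wtᵀ = D4two := by decide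
lemma hFR : Fmat * (Vt * GN) = (2 : ℤ) • Rmat := by decide
lemma hWL : Wtᵀ * LpM = 1 + CpM * Rmat := by decide
lemma hGNsymm : GNᵀ = GN := by decide

lemma fix_row (i : Fin 12) : MinvK *ᵥ Vt i = Vt i := by
  have h := congrFun (congrFun hVfix i)
  funext j
  have := h j
  simpa [Matrix.mul_apply, Matrix.mulVec, dotProduct, Matrix.transpose_apply,
    mul_comm] using this

lemma fix_span {x : Fin 16 → ℤ} (hx : MinvK *ᵥ x = x) :
    x ∈ Submodule.span ℤ (Set.range fun i => Vt i) := by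
  rw [Submodule.mem_span_range_iff_exists_fun]
  refine ⟨Lmat *ᵥ x, ?_⟩
  rw [sum_smul_rows]
  rw [Matrix.mulVec_mulVec, hVL, Matrix.add_mulVec, Matrix.one_mulVec,
    ← Matrix.mulVec_mulVec, Matrix.sub_mulVec, Matrix.one_mulVec, hx, sub_self,
    Matrix.mulVec_zero, add_zero]

/-- The explicit involution `MinvK` of `Λ_N` (induced by `(ℤ/2ℤ)²`) preserves the form,
squares to the identity, its fixed lattice is isometric to `U² ⊕ U(2) ⊕ D₄(2) ⊕ ⟨-2⟩²`,
and its orthogonal complement in `Λ_N` is isometric to `D₄(2)`. -/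
theorem stmt11 :
    MinvK.transpose * GN * MinvK = GN ∧
    MinvK * MinvK = 1 ∧
    (∃ v : Fin 12 → (Fin 16 → ℤ),
      (∀ i, MinvK.mulVec (v i) = v i) ∧
      (∀ x : Fin 16 → ℤ, MinvK.mulVec x = x → x ∈ Submodule.span ℤ (Set.range v)) ∧
      (∀ i j, v i ⬝ᵥ GN.mulVec (v j) = Fix12 i j)) ∧
    (∃ w : Fin 4 → (Fin 16 → ℤ),
      (∀ i (y : Fin 16 → ℤ), MinvK.mulVec y = y → w i ⬝ᵥ GN.mulVec y = 0) ∧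
      (∀ x : Fin 16 → ℤ,
        (∀ y : Fin 16 → ℤ, MinvK.mulVec y = y → x ⬝ᵥ GN.mulVec y = 0) →
        x ∈ Submodule.span ℤ (Set.range w)) ∧
      (∀ i j, w i ⬝ᵥ GN.mulVec (w j) = D4two i j)) := by
  refine ⟨hMG, hM2, ⟨fun i => Vt i, fix_row, fun x hx => fix_span hx, ?_⟩,
    ⟨fun i => Wt i, ?_, ?_, ?_⟩⟩
  · -- Gram of fixed part
    intro i j
    have h := congrFun (congrFun hVgram i) j
    rw [← h]
    simp [Matrix.mul_apply, Matrix.mulVec, dotProduct, Matrix.transpose_apply,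
      Finset.mul_sum, Finset.sum_mul, mul_comm, mul_left_comm]
    rw [Finset.sum_comm]
  · -- w i orthogonal to all fixed vectors
    intro i y hy
    have key : (Wt * GN) *ᵥ y = 0 := by
      rw [hWG, ← Matrix.mulVec_mulVec, Matrix.sub_mulVec, Matrix.one_mulVec, hy,
        sub_self, Matrix.mulVec_zero]
    have h0 := congrFun key i
    have : Wt i ⬝ᵥ GN *ᵥ y = ((Wt * GN) *ᵥ y) i := by
      rw [← Matrix.mulVec_mulVec]; rfl
    rw [this, h0]; rfl
  · -- spanning of the orthogonal complement
    intro x hx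
    have hVGx : (Vt * GN) *ᵥ x = 0 := by
      funext j
      have hfix := fix_row j
      have h1 := hx (Vt j) hfix
      have hvm : x ᵥ* GN = GN *ᵥ x := by
        rw [← Matrix.mulVec_transpose, hGNsymm]
      have h2 : x ⬝ᵥ GN *ᵥ Vt j = ((Vt * GN) *ᵥ x) j := by
        rw [Matrix.dotProduct_mulVec, dotProduct_comm, hvm,
          ← Matrix.mulVec_mulVec]
        rfl
      rw [h2] at h1
      rw [h1]; rfl
    have hRx : Rmat *ᵥ x = 0 := by
      have h2 : (2 : ℤ) • (Rmat *ᵥ x) = 0 := by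
        rw [← Matrix.smul_mulVec, ← hFR, ← Matrix.mulVec_mulVec, hVGx,
          Matrix.mulVec_zero]
      have := smul_eq_zero.mp h2
      rcases this with h | h
      · exact absurd h (by norm_num)
      · exact h
    rw [Submodule.mem_span_range_iff_exists_fun]
    refine ⟨LpM *ᵥ x, ?_⟩
    rw [sum_smul_rows]
    rw [Matrix.mulVec_mulVec, hWL, Matrix.add_mulVec, Matrix.one_mulVec,
      ← Matrix.mulVec_mulVec, hRx, Matrix.mulVec_zero, add_zero]
  · -- Gram of the complement
    intro i j
    have h := congrFun (congrFun hWgram i) j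
    rw [← h]
    simp [Matrix.mul_apply, Matrix.mulVec, dotProduct, Matrix.transpose_apply,
      Finset.mul_sum, Finset.sum_mul, mul_comm, mul_left_comm]
    rw [Finset.sum_comm]
end

section
/- The overlattice of D₆(2) ⊕ (U(2)³⊕⟨-4⟩²⊕⟨-2⟩²) generated by adjoining the six half-integral glue vectors (d₅+d₆+u₁+u₂+v₂)/2, (d₅+a₁+u₁+v₂)/2, (d₁+d₄+d₆+a₁)/2, (d₃+d₆+v₁)/2, (d₂+d₄+d₆+a₂)/2, (d₁+d₃+a₂+v₂)/2 is an even lattice isometric to Λ_N = U(2)³⊕E8⊕⟨-2⟩². -/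
open Matrix

def G0 : Matrix (Fin 16) (Fin 16) ℤ :=
  !![-4, 0, 2, 0, 0, 0, 0, 0, 0, 0, 0, 0, 0, 0, 0, 0;
    0, -4, 2, 0, 0, 0, 0, 0, 0, 0, 0, 0, 0, 0, 0, 0;
    2, 2, -4, 2, 0, 0, 0, 0, 0, 0, 0, 0, 0, 0, 0, 0;
    0, 0, 2, -4, 2, 0, 0, 0, 0, 0, 0, 0, 0, 0, 0, 0;
    0, 0, 0, 2, -4, 2, 0, 0, 0, 0, 0, 0, 0, 0, 0, 0;
    0, 0, 0, 0, 2, -4, 0, 0, 0, 0, 0, 0, 0, 0, 0, 0;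
    0, 0, 0, 0, 0, 0, 0, 2, 0, 0, 0, 0, 0, 0, 0, 0;
    0, 0, 0, 0, 0, 0, 2, 0, 0, 0, 0, 0, 0, 0, 0, 0;
    0, 0, 0, 0, 0, 0, 0, 0, 0, 2, 0, 0, 0, 0, 0, 0;
    0, 0, 0, 0, 0, 0, 0, 0, 2, 0, 0, 0, 0, 0, 0, 0;
    0, 0, 0, 0, 0, 0, 0, 0, 0, 0, 0, 2, 0, 0, 0, 0;
    0, 0, 0, 0, 0, 0, 0, 0, 0, 0, 2, 0, 0, 0, 0, 0;
    0, 0, 0, 0, 0, 0, 0, 0, 0, 0, 0, 0, -4, 0, 0, 0;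
    0, 0, 0, 0, 0, 0, 0, 0, 0, 0, 0, 0, 0, -4, 0, 0;
    0, 0, 0, 0, 0, 0, 0, 0, 0, 0, 0, 0, 0, 0, -2, 0;
    0, 0, 0, 0, 0, 0, 0, 0, 0, 0, 0, 0, 0, 0, 0, -2]

def glue : Fin 6 → (Fin 16 → ℚ) :=
  ![![0,0,0,0,1/2,1/2,1/2,1/2,0,1/2,0,0,0,0,0,0],
    ![0,0,0,0,1/2,0,1/2,0,0,1/2,0,0,1/2,0,0,0],
    ![1/2,0,0,1/2,0,1/2,0,0,0,0,0,0,1/2,0,0,0],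
    ![0,0,1/2,0,0,1/2,0,0,1/2,0,0,0,0,0,0,0],
    ![0,1/2,0,1/2,0,1/2,0,0,0,0,0,0,0,1/2,0,0],
    ![1/2,0,1/2,0,0,0,0,0,0,1/2,0,0,0,1/2,0,0]]

/-- The rational extension of the Gram matrix. -/
def GQ : Matrix (Fin 16) (Fin 16) ℚ := G0.map (Int.cast : ℤ → ℚ)

/-- The overlattice generated by `ℤ¹⁶` together with the glue vectors. -/
def OL : Submodule ℤ (Fin 16 → ℚ) :=
  Submodule.span ℤ
    (Set.range (fun i : Fin 16 => (Pi.single i 1 : Fin 16 → ℚ)) ∪ Set.range glue)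

def Pm : Fin 16 → Fin 16 → ℤ :=
  ![![134,-69,-86,91,1032,1127,1334,102,696,1566,0,-45224,-140,-187,100,-270],
    ![60,-47,-38,27,350,339,400,-26,268,524,0,-13972,-36,-65,54,-92],
    ![4,6,8,-4,6,2,10,36,30,0,2,0,12,0,-12,-4],
    ![0,0,0,0,0,0,0,0,0,0,0,2,0,0,0,0],
    ![-19,24,12,-1,-52,-21,-24,46,-62,-74,0,1156,-3,10,-22,14],
    ![-77,96,50,-3,-208,-83,-96,184,-248,-298,0,4688,-9,40,-88,56],
    ![111,-65,-72,70,810,866,1024,54,560,1226,0,-34912,-105,-147,88,-212],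
    ![558,-330,-360,350,4058,4332,5126,260,2810,6144,0,-174804,-526,-738,442,-1062],
    ![276,-178,-178,160,1902,1989,2352,63,1348,2874,0,-80634,-235,-346,228,-498],
    ![125,-78,-81,76,886,936,1106,44,620,1339,0,-37824,-112,-161,100,-232],
    ![-16,9,7,-10,-100,-103,-120,-3,-70,-149,0,4140,12,18,-12,26],
    ![-182,121,120,-103,-1248,-1300,-1538,-33,-890,-1886,0,52770,153,227,-152,328],
    ![-4,-3,2,-7,-58,-76,-90,-23,-30,-90,0,2940,11,11,0,14],
    ![32,-13,-19,25,258,289,342,35,169,392,0,-11530,-37,-47,22,-68],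
    ![-56,13,34,-53,-529,-614,-727,-105,-328,-805,0,24288,82,95,-34,138],
    ![43,-14,-26,37,380,433,512,64,242,576,0,-17170,-57,-68,28,-98]]

def G2m : Fin 6 → Fin 16 → ℤ :=
  ![![0,0,0,0,1,1,1,1,0,1,0,0,0,0,0,0],
    ![0,0,0,0,1,0,1,0,0,1,0,0,1,0,0,0],
    ![1,0,0,1,0,1,0,0,0,0,0,0,1,0,0,0],
    ![0,0,1,0,0,1,0,0,1,0,0,0,0,0,0,0],
    ![0,1,0,1,0,1,0,0,0,0,0,0,0,1,0,0],
    ![1,0,1,0,0,0,0,0,0,1,0,0,0,1,0,0]]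

def CforM : Fin 16 → Fin 6 → ℤ :=
  ![![0,0,0,0,1,0],
    ![0,0,0,0,1,0],
    ![0,0,0,0,0,0],
    ![0,0,0,0,0,0],
    ![0,0,1,0,0,0],
    ![0,0,1,0,0,0],
    ![0,0,1,0,1,0],
    ![0,0,0,0,0,0],
    ![1,1,0,0,0,0],
    ![0,0,0,0,0,1],
    ![1,1,1,0,1,1],
    ![1,1,0,0,1,0],
    ![1,1,0,0,1,0],
    ![1,1,0,1,1,0],
    ![1,0,0,0,1,0],
    ![0,0,1,0,0,0]]

def DforM : Fin 16 → Fin 16 → ℤ :=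
  ![![67,-35,-43,45,516,563,667,51,348,783,0,-22612,-70,-94,50,-135],
    ![30,-24,-19,13,175,169,200,-13,134,262,0,-6986,-18,-33,27,-46],
    ![2,3,4,-2,3,1,5,18,15,0,1,0,6,0,-6,-2],
    ![0,0,0,0,0,0,0,0,0,0,0,1,0,0,0,0],
    ![-10,12,6,-1,-26,-11,-12,23,-31,-37,0,578,-2,5,-11,7],
    ![-39,48,25,-2,-104,-42,-48,92,-124,-149,0,2344,-5,20,-44,28],
    ![55,-33,-36,34,405,432,512,27,280,613,0,-17456,-53,-74,44,-106],
    ![279,-165,-180,175,2029,2166,2563,130,1405,3072,0,-87402,-263,-369,221,-531],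
    ![138,-89,-89,80,950,994,1175,31,674,1436,0,-40317,-118,-173,114,-249],
    ![62,-39,-41,38,443,468,553,22,310,669,0,-18912,-56,-81,50,-116],
    ![-9,4,3,-6,-51,-53,-61,-2,-35,-76,0,2070,5,8,-6,13],
    ![-91,60,60,-52,-625,-651,-770,-17,-445,-944,0,26385,76,113,-76,164],
    ![-2,-2,1,-4,-30,-39,-46,-12,-15,-46,0,1470,5,5,0,7],
    ![16,-7,-10,12,128,143,170,17,84,195,0,-5765,-19,-24,11,-34],
    ![-28,6,17,-27,-265,-308,-364,-53,-164,-403,0,12144,41,47,-17,69],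
    ![21,-7,-13,18,190,216,256,32,121,288,0,-8585,-29,-34,14,-49]]

def DsingleM : Fin 16 → Fin 16 → ℤ :=
  ![![177,79,0,0,102,25,-738,-147,-68,-81,-493,-866,-687,-498,-392,-140],
    ![-26,-28,0,-2,-71,-18,150,29,-72,-35,5,34,13,0,-6,-4],
    ![-164,-58,0,-5,-42,-10,649,130,141,119,523,896,724,534,426,154],
    ![-382,-129,0,11,-76,-19,1499,299,360,297,1247,2124,1719,1272,1014,367],
    ![423,167,0,-7,165,41,-1717,-342,-279,-260,-1280,-2213,-1774,-1302,-1032,-371],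
    ![611,164,0,1,-21,-5,-2303,-461,-786,-594,-2174,-3648,-2984,-2226,-1788,-651],
    ![-51,13,0,18,92,23,130,27,200,126,296,463,397,308,254,95],
    ![-667,-200,0,5,-48,-12,2563,512,752,588,2282,3856,3140,2334,1870,679],
    ![-783,-262,0,0,-149,-37,3072,613,747,613,2565,4368,3538,2618,2090,757],
    ![-348,-134,0,15,-124,-31,1405,280,247,224,1068,1842,1479,1086,862,310],
    ![22612,6986,1,0,2344,578,-87402,-17456,-24486,-19366,-76556,-129606,-105400,-78254,-62638,-22734],
    ![0,0,0,1,0,0,0,0,0,0,0,0,0,0,0,0],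
    ![-140,-36,0,-12,9,3,526,105,190,142,508,850,696,520,418,152],
    ![-187,-65,0,0,-40,-10,738,147,174,144,610,1040,842,622,496,180],
    ![50,27,0,6,44,11,-221,-44,2,-12,-124,-224,-174,-124,-96,-34],
    ![-135,-46,0,2,-28,-7,531,106,126,104,440,750,606,448,358,130]]

def DglueM : Fin 6 → Fin 16 → ℤ :=
  ![![-16,5,0,16,32,8,39,8,67,42,96,150,129,100,83,31],
    ![-58,5,0,7,71,18,172,35,179,116,296,471,399,306,251,93],
    ![133,39,0,0,7,2,-508,-102,-152,-118,-456,-770,-628,-466,-374,-136],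
    ![-168,-78,0,-2,-106,-26,709,141,51,69,457,808,639,463,364,130],
    ![8,-29,0,5,-104,-26,42,7,-162,-94,-156,-225,-205,-166,-142,-54],
    ![-261,-89,0,5,-52,-13,1027,205,247,203,854,1456,1179,872,696,252]]

def bN : Fin 16 → Fin 16 → ℚ := fun i j => (Pm i j : ℚ) / 2

def gens : Fin 16 ⊕ Fin 6 → Fin 16 → ℚ :=
  Sum.elim (fun i : Fin 16 => (Pi.single i 1 : Fin 16 → ℚ)) glue

def hdiag : Fin 16 → ℤ := ![-1,-1,0,0,0,0,0,0,-1,-1,-1,-1,-1,-1,-1,-1]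

set_option maxHeartbeats 3200000 in
lemma hZgram : ∀ i j : Fin 16,
    (∑ s : Fin 16, ∑ t : Fin 16, Pm i s * G0 s t * Pm j t) = 4 * GN i j := by decide

lemma hZ1 : ∀ i j : Fin 16,
    Pm i j = 2 * DforM i j + ∑ k : Fin 6, CforM i k * G2m k j := by decide

lemma hZ2 : ∀ i j : Fin 16,
    (∑ k : Fin 16, DsingleM i k * Pm k j) = if j = i then 2 else 0 := by decide

lemma hZ3 : ∀ (m : Fin 6) (j : Fin 16),
    (∑ k : Fin 16, DglueM m k * Pm k j) = G2m m j := by decide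

lemma hG0sym : ∀ i j : Fin 16, G0 i j = G0 j i := by
  have h : ∀ i : Fin 16, ∀ j : Fin 16, decide (G0 i j = G0 j i) = true := by decide
  intro i j; exact of_decide_eq_true (h i j)

lemma hGNdiag : ∀ i : Fin 16, GN i i = 2 * hdiag i := by decide

lemma hglue : ∀ (m : Fin 6) (j : Fin 16), glue m j = (G2m m j : ℚ) / 2 := by
  intro m j
  fin_cases m <;> fin_cases j <;> norm_num [glue, G2m]

lemma gramQ : ∀ i j : Fin 16, bN i ⬝ᵥ GQ.mulVec (bN j) = ((GN i j : ℤ) : ℚ) := by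
  intro i j
  have h : ((∑ s : Fin 16, ∑ t : Fin 16, Pm i s * G0 s t * Pm j t : ℤ) : ℚ)
      = ((4 * GN i j : ℤ) : ℚ) := congrArg (fun z : ℤ => (z : ℚ)) (hZgram i j)
  push_cast at h
  simp only [dotProduct, Matrix.mulVec, GQ, Matrix.map_apply, bN]
  have e : ∀ s : Fin 16,
      ((Pm i s : ℚ)/2) * (∑ t : Fin 16, ((G0 s t : ℤ) : ℚ) * ((Pm j t : ℚ)/2))
        = (∑ t : Fin 16, ((Pm i s : ℚ)) * ((G0 s t : ℤ) : ℚ) * ((Pm j t : ℚ)))/4 := by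
    intro s
    rw [Finset.mul_sum, Finset.sum_div]
    exact Finset.sum_congr rfl fun t _ => by ring
  rw [Finset.sum_congr rfl fun s _ => e s, ← Finset.sum_div, h]
  ring

lemma OL_eq : OL = Submodule.span ℤ (Set.range gens) := by
  unfold OL gens
  rw [Set.Sum.elim_range]

lemma bN_mem : ∀ i, bN i ∈ OL := by
  intro i
  rw [OL_eq]
  have hrep : bN i = (∑ k : Fin 16, DforM i k • gens (Sum.inl k))
      + ∑ k : Fin 6, CforM i k • gens (Sum.inr k) := by
    funext j
    simp only [Pi.add_apply, Finset.sum_apply, Pi.smul_apply, Pi.mul_apply,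
      Pi.intCast_apply, gens, Sum.elim_inl, Sum.elim_inr, zsmul_eq_mul,
      Pi.single_apply, mul_ite, mul_one, mul_zero,
      Finset.sum_ite_eq, Finset.mem_univ, if_true, hglue, bN]
    have h : ((Pm i j : ℤ) : ℚ)
        = ((2 * DforM i j + ∑ k : Fin 6, CforM i k * G2m k j : ℤ) : ℚ) :=
      congrArg (fun z : ℤ => (z : ℚ)) (hZ1 i j)
    push_cast at h
    rw [show (∑ k : Fin 6, ((CforM i k : ℤ) : ℚ) * (((G2m k j : ℤ) : ℚ)/2))
        = (∑ k : Fin 6, ((CforM i k : ℤ) : ℚ) * ((G2m k j : ℤ) : ℚ))/2 by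
      rw [Finset.sum_div]; exact Finset.sum_congr rfl fun k _ => by ring]
    linarith [h]
  rw [hrep]
  exact Submodule.add_mem _
    (Submodule.sum_mem _ fun k _ => Submodule.smul_mem _ _
      (Submodule.subset_span ⟨Sum.inl k, rfl⟩))
    (Submodule.sum_mem _ fun k _ => Submodule.smul_mem _ _
      (Submodule.subset_span ⟨Sum.inr k, rfl⟩))

lemma gens_mem : ∀ k, gens k ∈ Submodule.span ℤ (Set.range bN) := by
  have key : ∀ c : Fin 16 → ℤ, (∑ k : Fin 16, c k • bN k) ∈ Submodule.span ℤ (Set.range bN) :=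
    fun c => Submodule.sum_mem _ fun k _ => Submodule.smul_mem _ _
      (Submodule.subset_span ⟨k, rfl⟩)
  rintro (i|m)
  · have hrep : gens (Sum.inl i) = ∑ k : Fin 16, DsingleM i k • bN k := by
      funext j
      simp only [gens, Sum.elim_inl, Finset.sum_apply, Pi.smul_apply, Pi.mul_apply,
        Pi.intCast_apply, zsmul_eq_mul, bN, Pi.single_apply]
      have h := hZ2 i j
      rw [show (∑ k : Fin 16, ((DsingleM i k : ℤ) : ℚ) * (((Pm k j : ℤ) : ℚ)/2))
          = ((∑ k : Fin 16, DsingleM i k * Pm k j : ℤ) : ℚ)/2 by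
        push_cast; rw [Finset.sum_div]; exact Finset.sum_congr rfl fun k _ => by ring]
      rw [h]
      by_cases hji : j = i
      · simp [hji]
      · simp [hji]
    rw [hrep]; exact key _
  · have hrep : gens (Sum.inr m) = ∑ k : Fin 16, DglueM m k • bN k := by
      funext j
      simp only [gens, Sum.elim_inr, Finset.sum_apply, Pi.smul_apply, Pi.mul_apply,
        Pi.intCast_apply, zsmul_eq_mul, bN]
      rw [hglue m j]
      rw [show (∑ k : Fin 16, ((DglueM m k : ℤ) : ℚ) * (((Pm k j : ℤ) : ℚ)/2))
          = ((∑ k : Fin 16, DglueM m k * Pm k j : ℤ) : ℚ)/2 by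
        push_cast; rw [Finset.sum_div]; exact Finset.sum_congr rfl fun k _ => by ring]
      rw [hZ3 m j]
    rw [hrep]; exact key _

lemma span_eq : Submodule.span ℤ (Set.range bN) = OL := by
  apply le_antisymm
  · rw [Submodule.span_le]
    rintro _ ⟨i, rfl⟩
    exact bN_mem i
  · rw [OL_eq, Submodule.span_le]
    rintro _ ⟨k, rfl⟩
    exact gens_mem k

lemma GQ_symm : ∀ x y : Fin 16 → ℚ, x ⬝ᵥ GQ.mulVec y = y ⬝ᵥ GQ.mulVec x := by
  intro x y
  simp only [dotProduct, Matrix.mulVec]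
  have expand : ∀ u v : Fin 16 → ℚ,
      (∑ s : Fin 16, u s * ∑ t : Fin 16, GQ s t * v t)
        = ∑ s : Fin 16, ∑ t : Fin 16, u s * GQ s t * v t := by
    intro u v
    exact Finset.sum_congr rfl fun s _ => by
      rw [Finset.mul_sum]; exact Finset.sum_congr rfl fun t _ => by ring
  rw [expand, expand, Finset.sum_comm]
  refine Finset.sum_congr rfl fun s _ => Finset.sum_congr rfl fun t _ => ?_
  have hsym : GQ t s = GQ s t := by
    simp only [GQ, Matrix.map_apply]
    exact congrArg (fun z : ℤ => (z : ℚ)) (hG0sym t s)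
  rw [hsym]; ring

lemma pair_int : ∀ x ∈ OL, ∀ y ∈ OL, ∃ k : ℤ, x ⬝ᵥ GQ.mulVec y = (k : ℚ) := by
  intro x hx y hy
  rw [← span_eq] at hx hy
  refine Submodule.span_induction₂
    (p := fun x y _ _ => ∃ k : ℤ, x ⬝ᵥ GQ.mulVec y = (k : ℚ)) ?_ ?_ ?_ ?_ ?_ ?_ ?_ hx hy
  · rintro _ _ ⟨i, rfl⟩ ⟨j, rfl⟩
    exact ⟨GN i j, gramQ i j⟩
  · intro y _
    exact ⟨0, by simp⟩
  · intro x _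
    exact ⟨0, by simp⟩
  · rintro x y z _ _ _ ⟨k1, h1⟩ ⟨k2, h2⟩
    exact ⟨k1 + k2, by rw [add_dotProduct, h1, h2]; push_cast; ring⟩
  · rintro x y z _ _ _ ⟨k1, h1⟩ ⟨k2, h2⟩
    exact ⟨k1 + k2, by rw [Matrix.mulVec_add, dotProduct_add, h1, h2]; push_cast; ring⟩
  · rintro r x y _ _ ⟨k, h⟩
    refine ⟨r * k, ?_⟩
    rw [← Int.cast_smul_eq_zsmul ℚ, smul_dotProduct, h, smul_eq_mul]
    push_cast; ring
  · rintro r x y _ _ ⟨k, h⟩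
    refine ⟨r * k, ?_⟩
    rw [← Int.cast_smul_eq_zsmul ℚ, Matrix.mulVec_smul, dotProduct_smul, h, smul_eq_mul]
    push_cast; ring

lemma even_self : ∀ x ∈ OL, ∃ k : ℤ, x ⬝ᵥ GQ.mulVec x = 2 * (k : ℚ) := by
  intro x hx
  rw [← span_eq] at hx
  induction hx using Submodule.span_induction with
  | mem x h =>
    obtain ⟨i, rfl⟩ := h
    refine ⟨hdiag i, ?_⟩
    rw [gramQ i i]
    exact_mod_cast congrArg (Int.cast : ℤ → ℚ) (hGNdiag i)
  | zero => exact ⟨0, by simp⟩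
  | add x y hx hy ihx ihy =>
    obtain ⟨kx, hkx⟩ := ihx
    obtain ⟨ky, hky⟩ := ihy
    obtain ⟨kxy, hkxy⟩ := pair_int x (span_eq ▸ hx) y (span_eq ▸ hy)
    have hyx : y ⬝ᵥ GQ.mulVec x = (kxy : ℚ) := by rw [GQ_symm y x, hkxy]
    refine ⟨kx + ky + kxy, ?_⟩
    rw [add_dotProduct, Matrix.mulVec_add, dotProduct_add,
      dotProduct_add, hkx, hky, hkxy, hyx]
    push_cast; ring
  | smul r x hx ih =>
    obtain ⟨k, h⟩ := ih
    refine ⟨r * r * k, ?_⟩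
    rw [← Int.cast_smul_eq_zsmul ℚ, smul_dotProduct, Matrix.mulVec_smul,
      dotProduct_smul, smul_eq_mul, smul_eq_mul, h]
    push_cast; ring

/-- The overlattice of `D₆(2) ⊕ (U(2)³ ⊕ ⟨-4⟩² ⊕ ⟨-2⟩²)` obtained by adjoining the six
glue vectors is an even integral lattice isometric to `Λ_N = U(2)³ ⊕ E8 ⊕ ⟨-2⟩²`. -/
theorem stmt16 :
    (∀ x ∈ OL, ∀ y ∈ OL, ∃ k : ℤ, x ⬝ᵥ GQ.mulVec y = (k : ℚ)) ∧
    (∀ x ∈ OL, ∃ k : ℤ, x ⬝ᵥ GQ.mulVec x = 2 * (k : ℚ)) ∧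
    (∃ b : Fin 16 → (Fin 16 → ℚ),
      Submodule.span ℤ (Set.range b) = OL ∧
      ∀ i j, b i ⬝ᵥ GQ.mulVec (b j) = ((GN i j : ℤ) : ℚ)) := by
  exact ⟨pair_int, even_self, bN, span_eq, gramQ⟩
end

section
/- For the intersection lattice S of rank 8 with Gram matrix having rows (0,3,1,1,1,1,1,1), (3,2,0,...,0), and (1,0,...,-2 in position i,...) for i=3..8 (i.e. ⟨h₁,h₂,ℓ₁,...,ℓ₆⟩ with h₁²=0, h₂²=2, h₁·h₂=3, ℓᵢ²=-2, h₁·ℓᵢ=1, all other products 0): the sublattice generated by ℓ₁-ℓ₂, ℓ₃-ℓ₄, ℓ₅-ℓ₆, and h₂+ℓ₂+ℓ₄+ℓ₆ is isometric to D₄(2). -/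
open Matrix

def S18 : Matrix (Fin 8) (Fin 8) ℤ :=
  !![0, 3, 1, 1, 1, 1, 1, 1;
    3, 2, 0, 0, 0, 0, 0, 0;
    1, 0, -2, 0, 0, 0, 0, 0;
    1, 0, 0, -2, 0, 0, 0, 0;
    1, 0, 0, 0, -2, 0, 0, 0;
    1, 0, 0, 0, 0, -2, 0, 0;
    1, 0, 0, 0, 0, 0, -2, 0;
    1, 0, 0, 0, 0, 0, 0, -2]

/-- The four classes `ℓ₁-ℓ₂, ℓ₃-ℓ₄, ℓ₅-ℓ₆, h₂+ℓ₂+ℓ₄+ℓ₆` in the lattice `S`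
(basis `h₁, h₂, ℓ₁, …, ℓ₆`). -/
def vS : Fin 4 → (Fin 8 → ℤ) :=
  ![![0,0,1,-1,0,0,0,0],
    ![0,0,0,0,1,-1,0,0],
    ![0,0,0,0,0,0,1,-1],
    ![0,1,0,1,0,1,0,1]]

/-- The sublattice of `S` generated by `ℓ₁-ℓ₂, ℓ₃-ℓ₄, ℓ₅-ℓ₆, h₂+ℓ₂+ℓ₄+ℓ₆` is isometric
to `D₄(2)`. -/
theorem stmt18 :
    ∃ P : Matrix (Fin 4) (Fin 4) ℤ, IsUnit P.det ∧
      ∀ i j, vS i ⬝ᵥ S18.mulVec (vS j) = (P.transpose * D4two * P) i j := by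
  refine ⟨!![1,0,0,0; 0,1,0,0; 0,0,0,1; 0,0,1,0], ?_, ?_⟩
  · rw [show (!![1,0,0,0; 0,1,0,0; 0,0,0,1; 0,0,1,0] : Matrix (Fin 4) (Fin 4) ℤ).det = -1 by decide]
    exact isUnit_one.neg
  · decide
end
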